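/- arXiv:2512.21086 — 6 statements merged into one kernel-verified Lean document; each statement's English description precedes it below -/
import Mathlib

section
/- Fix integers a ≥ 2 and b ≥ 0 with a + b ≥ 2, and let π be a permutation of size n that contains at least one pattern from Π(a−1,b+1). Then the set of associated (a−1)-values of the value underline-a in π is exactly the integer interval [underline-(a−1), underline-a − 1]; in particular this set of values forms an interval of integers. -/
/-- `f` picks out an occurrence of the pattern `ρ` in the permutation `π`. -/
def PermOcc {n m : ℕ} (π : Equiv.Perm (Fin n)) (ρ : Equiv.Perm (Fin m))
    (f : Fin m → Fin n) : Prop :=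
  StrictMono f ∧ ∀ j l : Fin m, π (f j) < π (f l) ↔ ρ j < ρ l

/-- `π` contains the pattern `ρ`. -/
def PermContains {n m : ℕ} (π : Equiv.Perm (Fin n)) (ρ : Equiv.Perm (Fin m)) : Prop :=
  ∃ f : Fin m → Fin n, PermOcc π ρ f

/-- The partial shuffle of size `m` with moved (1-indexed) value `a`:
the permutations of size `m`, other than the identity, in which the values
other than `a` appear in increasing order.  `Π(a,b)` is `partialShuffle (a+b) a`. -/
def partialShuffle (m a : ℕ) : Set (Equiv.Perm (Fin m)) :=
  {σ | σ ≠ 1 ∧ ∀ i j : Fin m, i < j → (σ i : ℕ) + 1 ≠ a → (σ j : ℕ) + 1 ≠ a → σ i < σ j}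

/-- The decreasing permutation `δ_k`. -/
def descPerm (k : ℕ) : Equiv.Perm (Fin k) := Fin.revPerm

/-- `σ_{a,b}` (with `m = a + b`): the identity permutation with the
values `a-1` and `a` transposed. -/
def sigmaPerm (m a : ℕ) (h2 : 2 ≤ a) (hm : a ≤ m) : Equiv.Perm (Fin m) :=
  Equiv.swap ⟨a - 2, by omega⟩ ⟨a - 1, by omega⟩

/-- The (1-indexed) value `v` of `π` acts as the `c`-element (i.e. corresponds to the
entry with 1-indexed value `c`) of an occurrence in `π` of some pattern from `P`. -/
def ActsAs {n m : ℕ} (π : Equiv.Perm (Fin n)) (P : Set (Equiv.Perm (Fin m)))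
    (c v : ℕ) : Prop :=
  ∃ ρ ∈ P, ∃ f : Fin m → Fin n, PermOcc π ρ f ∧
    ∃ j : Fin m, (ρ j : ℕ) + 1 = c ∧ (π (f j) : ℕ) + 1 = v

/-- `underline-a`: the smallest (1-indexed) value of `π` acting as the `a`-element of an
occurrence of a pattern from `Π(a-1, b+1)`. -/
noncomputable def underA (n a b : ℕ) (π : Equiv.Perm (Fin n)) : ℕ :=
  sInf {v | ActsAs π (partialShuffle (a + b) (a - 1)) a v}

/-- `q` is an associated `(a-1)`-value of `underline-a` in `π`. -/
def IsAssoc (n a b : ℕ) (π : Equiv.Perm (Fin n)) (q : ℕ) : Prop :=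
  ∃ ρ ∈ partialShuffle (a + b) (a - 1), ∃ f : Fin (a + b) → Fin n, PermOcc π ρ f ∧
    (∃ j : Fin (a + b), (ρ j : ℕ) + 1 = a ∧ (π (f j) : ℕ) + 1 = underA n a b π) ∧
    (∃ l : Fin (a + b), (ρ l : ℕ) + 1 = a - 1 ∧ (π (f l) : ℕ) + 1 = q)

/-- `underline-(a-1)`: the smallest associated `(a-1)`-value. -/
noncomputable def underA1 (n a b : ℕ) (π : Equiv.Perm (Fin n)) : ℕ :=
  sInf {q | IsAssoc n a b π q}

/-- The permutation of `Fin n` rotating the (0-indexed) interval `[x, y]`: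
`y ↦ x` and `v ↦ v + 1` for `x ≤ v < y`; all other elements are fixed. -/
def rotPerm (n x y : ℕ) : Equiv.Perm (Fin n) :=
  if h : x ≤ y ∧ y < n then
    { toFun := fun v =>
        if (v : ℕ) = y then ⟨x, by omega⟩
        else if hv : x ≤ (v : ℕ) ∧ (v : ℕ) < y then ⟨(v : ℕ) + 1, by omega⟩
        else v
      invFun := fun v =>
        if (v : ℕ) = x then ⟨y, by omega⟩
        else if hv : x < (v : ℕ) ∧ (v : ℕ) ≤ y then ⟨(v : ℕ) - 1, by omega⟩
        else v
      left_inv := by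
        intro v
        dsimp only
        split_ifs <;> apply Fin.ext <;> simp_all <;> omega
      right_inv := by
        intro v
        dsimp only
        split_ifs <;> apply Fin.ext <;> simp_all <;> omega }
  else 1

/-- The map `S` (depending on the parameters `a`, `b`): if `π` contains a pattern from
`Π(a-1, b+1)`, the values in the 1-indexed interval `[underline-(a-1), underline-a - 1]`
are increased by `1` and the value `underline-a` is replaced by `underline-(a-1)`;
otherwise `π` is fixed. -/
noncomputable def Smap (n a b : ℕ) (π : Equiv.Perm (Fin n)) : Equiv.Perm (Fin n) :=
  open Classical in
  if ∃ ρ ∈ partialShuffle (a + b) (a - 1), PermContains π ρ then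
    rotPerm n (underA1 n a b π - 1) (underA n a b π - 1) * π
  else π

/-!
Fix an occurrence whose `a`-element has the value `underline-a` and whose `(a-1)`-element has
the value `underline-(a-1)`. These two entries have consecutive ranks in the occurrence, so no
other entry of it takes a value between theirs, and exchanging either of them for the entry of
any value `q` in between preserves all ranks. Exchanging the `(a-1)`-element leaves the other
entries increasing, so it yields a partial shuffle, with `q` as associated value, unless the
new occurrence is increasing. In that case exchanging the `a`-element instead does yield a
partial shuffle, since the original one would otherwise be increasing too; its `a`-element has
value `q < underline-a`, contradicting minimality.
-/

open Finset Function

section rankIn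

variable {α α' β β' : Type*} [LinearOrder β] [LinearOrder β']

def rankIn (σ : α → β) (T : Finset α) (x : α) : ℕ := #{y ∈ T | σ y < σ x}

variable {σ : α → β} {T : Finset α} {x y : α}

lemma rankIn_le_rankIn (h : σ x ≤ σ y) : rankIn σ T x ≤ rankIn σ T y :=
  card_le_card <| monotone_filter_right T fun _ _ hz => hz.trans_le h

lemma rankIn_lt_rankIn (hx : x ∈ T) (h : σ x < σ y) : rankIn σ T x < rankIn σ T y :=
  card_lt_card <| (ssubset_iff_of_subset (monotone_filter_right T fun _ _ hz => hz.trans h)).2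
    ⟨x, mem_filter.2 ⟨hx, h⟩, fun hx' => lt_irrefl _ (mem_filter.1 hx').2⟩

lemma rankIn_lt_rankIn_iff (hx : x ∈ T) : rankIn σ T x < rankIn σ T y ↔ σ x < σ y :=
  ⟨fun h => lt_of_not_ge fun h' => h.not_ge (rankIn_le_rankIn h'), rankIn_lt_rankIn hx⟩

lemma rankIn_image [DecidableEq α'] {σ' : α' → β'} {g : α → α'} (hg : Injective g)
    (hord : ∀ y ∈ T, σ' (g y) < σ' (g x) ↔ σ y < σ x) :
    rankIn σ' (T.image g) (g x) = rankIn σ T x := by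
  unfold rankIn
  rw [filter_image, card_image_of_injective _ hg]
  exact congrArg card (filter_congr hord)

lemma rankIn_univ_perm {m : ℕ} (ρ : Equiv.Perm (Fin m)) (i : Fin m) :
    rankIn ρ univ i = ρ i := by
  unfold rankIn
  rw [← Fin.card_Iio (ρ i), ← card_map ρ.toEmbedding]
  congr 1
  ext v
  simp

lemma insert_erase_eq_image_swap [DecidableEq α] {p : α} (hx : x ∈ T) (hp : p ∉ T) :
    insert p (T.erase x) = T.image (Equiv.swap x p) := by
  ext z
  grind

lemma rankIn_insert_erase [DecidableEq α] {p z : α} (hσ : Injective σ) (hx : x ∈ T)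
    (hp : p ∉ T) (hgap : ∀ y ∈ T, y ≠ x → (σ y < σ x ↔ σ y < σ p)) (hz : z ∈ T) :
    rankIn σ (insert p (T.erase x)) (Equiv.swap x p z) = rankIn σ T z := by
  have hne : ∀ {y}, y ∈ T → y ≠ p := fun hy h => hp (h ▸ hy)
  rw [insert_erase_eq_image_swap hx hp]
  refine rankIn_image (Equiv.injective _) fun y hy => ?_
  rcases eq_or_ne y z with rfl | hyz
  · simp only [lt_irrefl]
  rcases eq_or_ne y x with rfl | hyx
  · rw [Equiv.swap_apply_left, Equiv.swap_apply_of_ne_of_ne hyz.symm (hne hz), ← not_le,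
      (hσ.ne (hne hz)).le_iff_lt, ← hgap z hz hyz.symm, ← (hσ.ne hyz.symm).le_iff_lt, not_le]
  rw [Equiv.swap_apply_of_ne_of_ne hyx (hne hy)]
  rcases eq_or_ne z x with rfl | hzx
  · rw [Equiv.swap_apply_left, hgap y hy hyx]
  · rw [Equiv.swap_apply_of_ne_of_ne hzx (hne hz)]

end rankIn

section PermOcc

variable {n m : ℕ} {π : Equiv.Perm (Fin n)} {ρ : Equiv.Perm (Fin m)} {f : Fin m → Fin n}

lemma PermOcc.rankIn_image_univ (hf : PermOcc π ρ f) (i : Fin m) :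
    rankIn π (univ.image f) (f i) = ρ i := by
  rw [rankIn_image hf.1.injective fun j _ => hf.2 j i, rankIn_univ_perm]

lemma PermOcc.strictMonoOn_image_iff (hf : PermOcc π ρ f) (S : Finset (Fin m)) :
    StrictMonoOn π (S.image f : Set (Fin n)) ↔ StrictMonoOn ρ (S : Set (Fin m)) := by
  simp only [StrictMonoOn, coe_image, Set.forall_mem_image, hf.1.lt_iff_lt, hf.2]

lemma exists_permOcc_image_eq (π : Equiv.Perm (Fin n)) (T : Finset (Fin n)) :
    ∃ (ρ : Equiv.Perm (Fin #T)) (f : Fin #T → Fin n),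
      PermOcc π ρ f ∧ univ.image f = T := by
  set f := T.orderEmbOfFin rfl
  have hV : #(T.image π) = #T := card_image_of_injective _ π.injective
  set e := (T.image π).orderIsoOfFin hV
  let g : Fin #T → Fin #T := fun i =>
    e.symm ⟨π (f i), mem_image_of_mem _ (T.orderEmbOfFin_mem rfl i)⟩
  have hg : Injective g := fun i j hij =>
    f.injective (π.injective (congrArg Subtype.val (e.symm.injective hij)))
  refine ⟨Equiv.ofBijective g (Finite.injective_iff_bijective.1 hg), f,
    ⟨f.strictMono, fun i j => ?_⟩, T.image_orderEmbOfFin_univ rfl⟩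
  simp [g, e.symm.lt_iff_lt]

end PermOcc

lemma strictMonoOn_of_strictMonoOn_insert_erase {α β : Type*} [LinearOrder α] [LinearOrder β]
    {σ : α → β} {T : Finset α} {s t p : α} (hs : s ∈ T) (ht : t ∈ T)
    (h1 : StrictMonoOn σ (↑(insert p (T.erase t)) : Set α))
    (h2 : StrictMonoOn σ (↑(insert p (T.erase s)) : Set α))
    (htp : σ t < σ p) (hps : σ p < σ s) : StrictMonoOn σ (T : Set α) := by
  have hts : t ≠ s := fun h => (htp.trans hps).ne (congrArg σ h)
  have htp' : t < p := (h2.lt_iff_lt (by simp [ht, hts]) (by simp)).1 htp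
  have hps' : p < s := (h1.lt_iff_lt (by simp) (by simp [hs, hts.symm])).1 hps
  intro y hy z hz hyz
  rcases eq_or_ne y t with rfl | hyt
  · rcases eq_or_ne z s with rfl | hzs
    · exact htp.trans hps
    · exact h2 (by simp [hy, hts]) (by simp [hz, hzs]) hyz
  rcases eq_or_ne z t with rfl | hzt
  · rcases eq_or_ne y s with rfl | hys
    · exact absurd (hyz.trans (htp'.trans hps')) (lt_irrefl _)
    · exact h2 (by simp [hy, hys]) (by simp [hz, hts]) hyz
  · exact h1 (by simp [hy, hyt]) (by simp [hz, hzt]) hyz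

section Shuffle

variable {n : ℕ}

/-- `s` and `t` are the positions of the entries of (0-indexed) values `c + 1` and `c` in an
occurrence in `π`, with position set `T`, of a pattern from `partialShuffle m (c + 1)`. -/
def IsShuffleOccAt (π : Equiv.Perm (Fin n)) (m c : ℕ) (s t : Fin n) : Prop :=
  ∃ T : Finset (Fin n), #T = m ∧ s ∈ T ∧ t ∈ T ∧ rankIn π T s = c + 1 ∧ rankIn π T t = c ∧
    ¬ StrictMonoOn π (T : Set (Fin n)) ∧ StrictMonoOn π (↑(T.erase t) : Set (Fin n))

variable {π : Equiv.Perm (Fin n)} {m c : ℕ} {s t p : Fin n}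

lemma IsShuffleOccAt.lt (h : IsShuffleOccAt π m c s t) : π t < π s := by
  obtain ⟨T, -, -, ht, hrs, hrt, -⟩ := h
  exact (rankIn_lt_rankIn_iff ht).1 (by omega)

lemma IsShuffleOccAt.exchange (h : IsShuffleOccAt π m c s t) (htp : π t ≤ π p)
    (hps : π p < π s) : IsShuffleOccAt π m c s p ∨ IsShuffleOccAt π m c p t := by
  rcases htp.eq_or_lt with htp | htp
  · exact .inl (π.injective htp ▸ h)
  obtain ⟨T, hcard, hs, ht, hrs, hrt, hnot, hmono⟩ := h
  have hgap : ∀ y ∈ T, π y ≤ π t ∨ π s ≤ π y := fun y hy => by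
    by_contra! hy'
    have := rankIn_lt_rankIn ht hy'.1
    have := rankIn_lt_rankIn hy hy'.2
    omega
  have hp : p ∉ T := fun hp => (hgap p hp).elim (not_le.2 htp) (not_le.2 hps)
  have hts : t ≠ s := fun h => (htp.trans hps).ne (congrArg π h)
  have hgap_t : ∀ y ∈ T, y ≠ t → (π y < π t ↔ π y < π p) := fun y hy hyt => by
    have := π.injective.ne hyt
    rcases hgap y hy with h | h <;> constructor <;> intro <;> order
  have hgap_s : ∀ y ∈ T, y ≠ s → (π y < π s ↔ π y < π p) := fun y hy hys => by
    have := π.injective.ne hys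
    rcases hgap y hy with h | h <;> constructor <;> intro <;> order
  have hcard' : ∀ x ∈ T, #(insert p (T.erase x)) = m := fun x hx => by
    rw [card_insert_of_notMem (fun h => hp (mem_of_mem_erase h)), card_erase_of_mem hx,
      Nat.sub_add_cancel (card_pos.2 ⟨x, hx⟩), hcard]
  by_cases h1 : StrictMonoOn π (↑(insert p (T.erase t)) : Set (Fin n))
  · refine .inr ⟨insert p (T.erase s), hcard' s hs, mem_insert_self _ _, by simp [ht, hts],
      ?_, ?_, fun h2 => hnot (strictMonoOn_of_strictMonoOn_insert_erase hs ht h1 h2 htp hps),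
      h1.mono (coe_subset.2 fun y => by simp only [mem_erase, mem_insert]; tauto)⟩
    · simpa [hrs] using rankIn_insert_erase π.injective hs hp hgap_s hs
    · simpa [Equiv.swap_apply_of_ne_of_ne hts (ne_of_mem_of_not_mem ht hp), hrt]
        using rankIn_insert_erase π.injective hs hp hgap_s ht
  · refine .inl ⟨insert p (T.erase t), hcard' t ht, by simp [hs, hts.symm],
      mem_insert_self _ _, ?_, ?_, h1, ?_⟩
    · simpa [Equiv.swap_apply_of_ne_of_ne hts.symm (ne_of_mem_of_not_mem hs hp), hrs]
        using rankIn_insert_erase π.injective ht hp hgap_t hs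
    · simpa [hrt] using rankIn_insert_erase π.injective ht hp hgap_t ht
    · rwa [erase_insert fun h => hp (mem_of_mem_erase h)]

end Shuffle

section Bridge

variable {n m c : ℕ} {π : Equiv.Perm (Fin n)} {ρ : Equiv.Perm (Fin m)} {f : Fin m → Fin n}

lemma isShuffleOccAt_of_permOcc (hρ : ρ ∈ partialShuffle m (c + 1)) (hf : PermOcc π ρ f)
    {j l : Fin m} (hj : (ρ j : ℕ) = c + 1) (hl : (ρ l : ℕ) = c) :
    IsShuffleOccAt π m c (f j) (f l) := by
  refine ⟨univ.image f, ?_, mem_image_of_mem _ (mem_univ _), mem_image_of_mem _ (mem_univ _),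
    by rw [hf.rankIn_image_univ, hj], by rw [hf.rankIn_image_univ, hl], fun hmono => hρ.1 ?_, ?_⟩
  · rw [card_image_of_injective _ hf.1.injective, card_univ, Fintype.card_fin]
  · have hρmono : StrictMono ρ := by
      rw [← strictMonoOn_univ, ← coe_univ, ← hf.strictMonoOn_image_iff]
      exact hmono
    exact Equiv.ext fun i => hρmono.apply_eq
  · rw [← image_erase hf.1.injective, hf.strictMonoOn_image_iff]
    intro i hi k hk hik
    have hne : ∀ {i}, i ∈ (↑(univ.erase l) : Set (Fin m)) → (ρ i : ℕ) + 1 ≠ c + 1 :=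
      fun hi h => (mem_erase.1 hi).1 (ρ.injective (Fin.ext (by omega)))
    exact hρ.2 i k hik (hne hi) (hne hk)

lemma IsShuffleOccAt.exists_permOcc {s t : Fin n} (h : IsShuffleOccAt π m c s t) :
    ∃ ρ ∈ partialShuffle m (c + 1), ∃ f : Fin m → Fin n, PermOcc π ρ f ∧
      (∃ j, (ρ j : ℕ) = c + 1 ∧ f j = s) ∧ ∃ l, (ρ l : ℕ) = c ∧ f l = t := by
  obtain ⟨T, rfl, hs, ht, hrs, hrt, hnot, hmono⟩ := h
  obtain ⟨ρ, f, hf, himg⟩ := exists_permOcc_image_eq π T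
  rw [← himg] at hs ht hrs hrt hnot hmono
  obtain ⟨j, -, rfl⟩ := mem_image.1 hs
  obtain ⟨l, -, rfl⟩ := mem_image.1 ht
  rw [hf.rankIn_image_univ] at hrs hrt
  refine ⟨ρ, ⟨fun h1 => hnot ?_, fun i k hik hi hk => ?_⟩,
    f, hf, ⟨j, hrs, rfl⟩, l, hrt, rfl⟩
  · rw [hf.strictMonoOn_image_iff, h1, Equiv.Perm.coe_one, coe_univ, strictMonoOn_univ]
    exact strictMono_id
  · rw [← image_erase hf.1.injective univ l, hf.strictMonoOn_image_iff] at hmono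
    have hne : ∀ {i}, (ρ i : ℕ) + 1 ≠ c + 1 → i ∈ (↑(univ.erase l) : Set _) :=
      fun hi => mem_erase.2 ⟨fun h => hi (by rw [h, hrt]), mem_univ _⟩
    exact hmono (hne hi) (hne hk) hik

end Bridge

section Underline

variable {n a b : ℕ} {π : Equiv.Perm (Fin n)}

lemma actsAs_iff (ha : 2 ≤ a) {v : ℕ} :
    ActsAs π (partialShuffle (a + b) (a - 1)) a v ↔
      ∃ s t, IsShuffleOccAt π (a + b) (a - 2) s t ∧ (π s : ℕ) + 1 = v := by
  obtain ⟨c, rfl⟩ : ∃ c, a = c + 2 := ⟨a - 2, by omega⟩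
  simp only [Nat.add_sub_cancel]
  constructor
  · rintro ⟨ρ, hρ, f, hf, j, hj, hv⟩
    exact ⟨f j, f (ρ.symm ⟨c, by omega⟩),
      isShuffleOccAt_of_permOcc hρ hf (by omega) (by simp), hv⟩
  · rintro ⟨s, t, h, hv⟩
    obtain ⟨ρ, hρ, f, hf, ⟨j, hj, rfl⟩, -⟩ := h.exists_permOcc
    exact ⟨ρ, hρ, f, hf, j, by omega, hv⟩

lemma isAssoc_iff (ha : 2 ≤ a) {q : ℕ} :
    IsAssoc n a b π q ↔ ∃ s t, IsShuffleOccAt π (a + b) (a - 2) s t ∧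
      (π s : ℕ) + 1 = underA n a b π ∧ (π t : ℕ) + 1 = q := by
  obtain ⟨c, rfl⟩ : ∃ c, a = c + 2 := ⟨a - 2, by omega⟩
  simp only [Nat.add_sub_cancel]
  constructor
  · rintro ⟨ρ, hρ, f, hf, ⟨j, hj, hu⟩, l, hl, hq⟩
    exact ⟨f j, f l, isShuffleOccAt_of_permOcc hρ hf (by omega) (by omega), hu, hq⟩
  · rintro ⟨s, t, h, hu, hq⟩
    obtain ⟨ρ, hρ, f, hf, ⟨j, hj, rfl⟩, l, hl, rfl⟩ := h.exists_permOcc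
    exact ⟨ρ, hρ, f, hf, ⟨j, by omega, hu⟩, l, by omega, hq⟩

lemma exists_isShuffleOccAt_underA_underA1 (ha : 2 ≤ a)
    (h : ∃ ρ ∈ partialShuffle (a + b) (a - 1), PermContains π ρ) :
    ∃ s t, IsShuffleOccAt π (a + b) (a - 2) s t ∧
      (π s : ℕ) + 1 = underA n a b π ∧ (π t : ℕ) + 1 = underA1 n a b π := by
  obtain ⟨ρ, hρ, f, hf⟩ := h
  have hA : ActsAs π (partialShuffle (a + b) (a - 1)) a (underA n a b π) :=
    Nat.sInf_mem (s := {v | ActsAs π _ a v})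
      ⟨_, ρ, hρ, f, hf, ρ.symm ⟨a - 1, by omega⟩,
        by simp only [Equiv.apply_symm_apply]; omega, rfl⟩
  obtain ⟨s, t, hst, hs⟩ := (actsAs_iff ha).1 hA
  exact (isAssoc_iff ha).1 (Nat.sInf_mem (s := {q | IsAssoc n a b π q})
    ⟨_, (isAssoc_iff ha).2 ⟨s, t, hst, hs, rfl⟩⟩)

end Underline

theorem assoc_values_form_interval (a b n : ℕ) (ha : 2 ≤ a) (π : Equiv.Perm (Fin n))
    (h : ∃ ρ ∈ partialShuffle (a + b) (a - 1), PermContains π ρ) :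
    {q : ℕ | IsAssoc n a b π q} = Set.Icc (underA1 n a b π) (underA n a b π - 1) := by
  obtain ⟨s, t, hst, hs, ht⟩ := exists_isShuffleOccAt_underA_underA1 ha h
  ext q
  constructor
  · intro hq
    obtain ⟨s', t', hst', hs', ht'⟩ := (isAssoc_iff ha).1 hq
    have := Fin.lt_def.1 hst'.lt
    refine ⟨Nat.sInf_le hq, ?_⟩
    omega
  · rintro ⟨hwq, hqu⟩
    have := (π s).isLt
    set p := π.symm ⟨q - 1, by omega⟩
    have hp : (π p : ℕ) = q - 1 := by simp [p]
    rcases hst.exchange (p := p) (Fin.le_def.2 (by omega)) (Fin.lt_def.2 (by omega))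
      with h' | h'
    · exact (isAssoc_iff ha).2 ⟨s, p, h', hs, by omega⟩
    · have : underA n a b π ≤ q := Nat.sInf_le ((actsAs_iff ha).2 ⟨p, t, h', by omega⟩)
      omega
end

section
/- Fix integers a ≥ 2 and b ≥ 0 with a + b ≥ 2, and let π be a permutation of size n that contains at least one pattern from Π(a−1,b+1). Let i_1 < ⋯ < i_m be indices in {1,…,n}. If the sequence π_{i_1}…π_{i_m} is not order-isomorphic to the sequence S(π)_{i_1}…S(π)_{i_m}, then some index i_j satisfies π_{i_j} = underline-a and some index i_l satisfies that π_{i_l} is an associated (a−1)-value of underline-a. -/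
/-! Write `a = k + 2` and fix an occurrence whose `a`-element has value `r = underline-a` and
whose `(a-1)`-element has value `q = underline-(a-1)`. `S` only rotates the values of `[q, r]`, so
it reverses the order of two entries only if one of them is `r` and the other has a value `v` with
`q ≤ v < r`; it remains to see that `v` is associated with `r`. Put `v` in place of the
`(a-1)`-element of the occurrence: sorted by position, this is again an occurrence of a pattern of
`Π(a-1,b+1)` unless it is increasing. If it is, put `v` in place of the `a`-element instead: the
entries other than the `(a-1)`-element still increase, and since `v < underline-a` the result is
not an occurrence of a pattern of `Π(a-1,b+1)`, so it is increasing too. But if both replacements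
are increasing, so is the original occurrence. -/

open Function

section SameOrder

variable {ι α β : Type*} [LinearOrder α] [LinearOrder β]

def SameOrder (u : ι → α) (v : ι → β) : Prop :=
  ∀ x y, u x < u y ↔ v x < v y

variable {u : ι → α} {v : ι → β}

lemma SameOrder.injective (h : SameOrder u v) (hv : Injective v) : Injective u := by
  intro x y hxy
  by_contra hne
  rcases (hv.ne hne).lt_or_gt with hlt | hlt
  · exact ((h x y).2 hlt).ne hxy
  · exact ((h y x).2 hlt).ne hxy.symm

lemma SameOrder.le_iff (h : SameOrder u v) (x y : ι) : u x ≤ u y ↔ v x ≤ v y := by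
  simpa only [not_lt] using (h y x).not

lemma SameOrder.update [DecidableEq ι] (h : SameOrder u v) {i : ι} {c : α}
    (hc : ∀ x ≠ i, (u x < c ↔ v x < v i) ∧ (c < u x ↔ v i < v x)) :
    SameOrder (Function.update u i c) v := by
  intro x y
  rcases eq_or_ne x i with hx | hx <;> rcases eq_or_ne y i with hy | hy
  · simp [hx, hy]
  · subst hx; simpa [update_of_ne hy] using (hc y hy).2
  · subst hy; simpa [update_of_ne hx] using (hc x hx).1
  · simpa [update_of_ne hx, update_of_ne hy] using h x y

lemma SameOrder.update_of_between [DecidableEq ι] (h : SameOrder u v) (hv : Injective v)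
    {l j : ι} (hgap : ∀ x, v x ≤ v l ∨ v j ≤ v x) {c : α} (hl : u l < c) (hj : c < u j) {i : ι}
    (hi : i = l ∨ i = j) : SameOrder (Function.update u i c) v := by
  have hlj : v l < v j := (h l j).1 (hl.trans hj)
  have below : ∀ x, u x < c ↔ v x ≤ v l := fun x =>
    ⟨fun hx => (hgap x).resolve_right fun hjx => ((h.le_iff j x).2 hjx).not_gt (hx.trans hj),
      fun hx => ((h.le_iff x l).2 hx).trans_lt hl⟩
  have above : ∀ x, c < u x ↔ v j ≤ v x := fun x =>
    ⟨fun hx => (hgap x).resolve_left fun hxl => ((h.le_iff x l).2 hxl).not_gt (hl.trans hx),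
      fun hx => hj.trans_le ((h.le_iff j x).2 hx)⟩
  refine h.update fun x hx => ?_
  rw [below, above]
  rcases hi with rfl | rfl
  · exact ⟨(hv.ne hx).le_iff_lt,
      ⟨hlj.trans_le, fun h' => (hgap x).resolve_left (not_le.2 h')⟩⟩
  · exact ⟨⟨fun h' => h'.trans_lt hlj, fun h' => (hgap x).resolve_right (not_le.2 h')⟩,
      (hv.ne hx).symm.le_iff_lt⟩

end SameOrder

section Increasing

variable {ι α β : Type*} [LinearOrder α] [LinearOrder β]

def Increasing (g : ι → α) (σ : ι → β) : Prop :=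
  ∀ x y, g x < g y → σ x < σ y

variable [DecidableEq ι] {g : ι → α} {σ : ι → β} {l j : ι} {c : α}

lemma lt_of_update_lt_of_increasing_update (hσ : Injective σ) (hlj : σ l < σ j)
    (hgap : ∀ x, σ x ≤ σ l ∨ σ j ≤ σ x) (hinc : Increasing (update g l c) σ) {x y : ι}
    (hx : x ≠ l) (hy : y ≠ l) (hxy : update g j c x < update g j c y) : σ x < σ y := by
  rcases eq_or_ne x j with hxj | hxj <;> rcases eq_or_ne y j with hyj | hyj
  · rw [hxj, hyj] at hxy
    exact absurd hxy (lt_irrefl _)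
  · rw [hxj, update_self, update_of_ne hyj] at hxy
    have hly : σ l < σ y := hinc l y (by rwa [update_self, update_of_ne hy])
    rw [hxj]
    exact ((hgap y).resolve_left (not_le.2 hly)).lt_of_ne (hσ.ne hyj.symm)
  · rw [hyj, update_self, update_of_ne hxj] at hxy
    rw [hyj]
    exact (hinc x l (by rwa [update_self, update_of_ne hx])).trans hlj
  · rw [update_of_ne hxj, update_of_ne hyj] at hxy
    exact hinc x y (by rwa [update_of_ne hx, update_of_ne hy])

lemma Increasing.of_update_of_update (hlj : σ l < σ j) (hl : Increasing (update g l c) σ)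
    (hj : Increasing (update g j c) σ) : Increasing g σ := by
  intro x y hxy
  by_cases hoffl : x ≠ l ∧ y ≠ l
  · exact hl x y (by rwa [update_of_ne hoffl.1, update_of_ne hoffl.2])
  by_cases hoffj : x ≠ j ∧ y ≠ j
  · exact hj x y (by rwa [update_of_ne hoffj.1, update_of_ne hoffj.2])
  have hne : l ≠ j := hlj.ne ∘ congrArg σ
  rw [not_and_or, not_ne_iff, not_ne_iff] at hoffl hoffj
  rcases hoffl with hxl | hyl <;> rcases hoffj with hxj | hyj
  · exact absurd (hxl.symm.trans hxj) hne
  · subst hxl hyj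
    exact hlj
  · subst hyl hxj
    have hcj : ¬ g x < c := fun h' => (hl x y (by simpa [update_of_ne hne.symm] using h')).asymm hlj
    have hcl : ¬ c < g y := fun h' => (hj x y (by simpa [update_of_ne hne] using h')).asymm hlj
    exact absurd (hxy.trans_le (not_lt.1 hcl)) hcj
  · exact absurd (hyl.symm.trans hyj) hne

end Increasing

section Patterns

variable {n m : ℕ} {π : Equiv.Perm (Fin n)}

lemma permOcc_sort {σ : Equiv.Perm (Fin m)} {g : Fin m → Fin n} (h : SameOrder (π ∘ g) σ) :
    PermOcc π (σ * Tuple.sort g) (g ∘ Tuple.sort g) :=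
  ⟨(Tuple.monotone_sort g).strictMono_of_injective
      ((h.injective σ.injective).of_comp.comp (Tuple.sort g).injective),
    fun x y => h (Tuple.sort g x) (Tuple.sort g y)⟩

lemma exists_partialShuffle_occ {k : ℕ} {σ : Equiv.Perm (Fin m)} {g : Fin m → Fin n}
    (h : SameOrder (π ∘ g) σ)
    (hinc : ∀ x y, (σ x : ℕ) ≠ k → (σ y : ℕ) ≠ k → g x < g y → σ x < σ y)
    (hnot : ¬ Increasing g σ) :
    ∃ ρ ∈ partialShuffle m (k + 1), ∃ f, PermOcc π ρ f ∧ ∀ x, ∃ y, ρ y = σ x ∧ f y = g x := by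
  have hocc := permOcc_sort h
  refine ⟨σ * Tuple.sort g, ⟨fun h1 => hnot fun x y hxy => ?_, fun x y hxy hx hy => ?_⟩, _, hocc,
    fun x => ⟨(Tuple.sort g).symm x, by simp, by simp⟩⟩
  · have e : ∀ z, σ z = (Tuple.sort g).symm z := fun z => by
      simpa using DFunLike.congr_fun h1 ((Tuple.sort g).symm z)
    rw [e, e]
    exact hocc.1.lt_iff_lt.1 (by simpa using hxy)
  · exact hinc _ _ (by simpa using hx) (by simpa using hy) (hocc.1 hxy)

/-- Either `p` can replace the `(k+1)`-element `f l` of the occurrence, or `p` is the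
`(k+2)`-element of another occurrence. -/
lemma partialShuffle_replace {k : ℕ} {ρ : Equiv.Perm (Fin m)} {f : Fin m → Fin n} {l j : Fin m}
    {p : Fin n} (hρ : ρ ∈ partialShuffle m (k + 1)) (hf : PermOcc π ρ f)
    (hl : (ρ l : ℕ) = k) (hj : (ρ j : ℕ) = k + 1) (hpl : π (f l) < π p) (hpj : π p < π (f j)) :
    (∃ ρ' ∈ partialShuffle m (k + 1), ∃ f', PermOcc π ρ' f' ∧
      (∃ x, (ρ' x : ℕ) = k + 1 ∧ f' x = f j) ∧ ∃ y, (ρ' y : ℕ) = k ∧ f' y = p) ∨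
    ∃ ρ' ∈ partialShuffle m (k + 1), ∃ f', PermOcc π ρ' f' ∧
      ∃ x, (ρ' x : ℕ) = k + 1 ∧ f' x = p := by
  classical
  have hlj : ρ l < ρ j := Fin.lt_def.2 (by omega)
  have hgap : ∀ x, ρ x ≤ ρ l ∨ ρ j ≤ ρ x := fun x => by simp only [Fin.le_def]; omega
  have hsame : ∀ i, i = l ∨ i = j → SameOrder (π ∘ update f i p) ρ := fun i hi => by
    rw [comp_update]
    exact SameOrder.update_of_between (u := π ∘ f) hf.2 ρ.injective hgap hpl hpj hi
  have hoff : ∀ x, (ρ x : ℕ) ≠ k → x ≠ l := fun x hx e => hx (e ▸ hl)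
  have hjl : j ≠ l := hoff j (by omega)
  by_cases hinc : Increasing (update f l p) ρ
  · right
    obtain ⟨ρ', hρ', f', hf', hpos⟩ := exists_partialShuffle_occ (hsame j (.inr rfl))
      (fun x y hx hy => lt_of_update_lt_of_increasing_update ρ.injective hlj hgap hinc
        (hoff x hx) (hoff y hy))
      (fun hinc' => hρ.1 (Equiv.ext fun x => StrictMono.apply_eq fun x y hxy =>
        hinc.of_update_of_update hlj hinc' x y (hf.1 hxy)))
    obtain ⟨x, hx, hfx⟩ := hpos j
    exact ⟨ρ', hρ', f', hf', x, by rw [hx, hj], by simp [hfx]⟩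
  · left
    obtain ⟨ρ', hρ', f', hf', hpos⟩ := exists_partialShuffle_occ (hsame l (.inl rfl))
      (fun x y hx hy hxy => by
        rw [update_of_ne (hoff x hx), update_of_ne (hoff y hy)] at hxy
        exact hρ.2 x y (hf.1.lt_iff_lt.1 hxy) (by omega) (by omega)) hinc
    obtain ⟨x, hx, hfx⟩ := hpos j
    obtain ⟨y, hy, hfy⟩ := hpos l
    exact ⟨ρ', hρ', f', hf', ⟨x, by rw [hx, hj], by simp [hfx, update_of_ne hjl]⟩,
      y, by rw [hy, hl], by simp [hfy]⟩

end Patterns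

lemma rotPerm_apply {n x y : ℕ} (hxy : x ≤ y) (hy : y < n) (v : Fin n) :
    (rotPerm n x y v : ℕ) =
      if (v : ℕ) = y then x else if x ≤ v ∧ (v : ℕ) < y then v + 1 else v := by
  simp only [rotPerm, dif_pos (And.intro hxy hy), Equiv.coe_fn_mk]
  split_ifs <;> rfl

lemma eq_and_mem_Ico_of_not_lt_iff_rotPerm_lt {n x y : ℕ} (hxy : x ≤ y) (hy : y < n)
    {v w : Fin n} (h : ¬ (v < w ↔ rotPerm n x y v < rotPerm n x y w)) :
    ((v : ℕ) = y ∧ x ≤ w ∧ (w : ℕ) < y) ∨ ((w : ℕ) = y ∧ x ≤ v ∧ (v : ℕ) < y) := by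
  rw [Fin.lt_def, Fin.lt_def, rotPerm_apply hxy hy, rotPerm_apply hxy hy] at h
  split_ifs at h <;> omega

section Underline

variable {n b k : ℕ} {π : Equiv.Perm (Fin n)}

lemma isAssoc_underA1 (h : ∃ ρ ∈ partialShuffle (k + 2 + b) (k + 1), PermContains π ρ) :
    IsAssoc n (k + 2) b π (underA1 n (k + 2) b π) := by
  obtain ⟨ρ, hρ, f, hf⟩ := h
  obtain ⟨ρ', hρ', f', hf', j, hj, hfj⟩ : ActsAs π (partialShuffle (k + 2 + b) (k + 1)) (k + 2)
      (underA n (k + 2) b π) :=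
    Nat.sInf_mem (s := {v | ActsAs π (partialShuffle (k + 2 + b) (k + 1)) (k + 2) v})
      ⟨_, ρ, hρ, f, hf, ρ.symm ⟨k + 1, by omega⟩, by simp, rfl⟩
  exact Nat.sInf_mem (s := {q | IsAssoc n (k + 2) b π q})
    ⟨_, ρ', hρ', f', hf', ⟨j, hj, hfj⟩, ρ'.symm ⟨k, by omega⟩, by simp, rfl⟩

lemma isAssoc_of_underA1_le_of_lt_underA
    (h : ∃ ρ ∈ partialShuffle (k + 2 + b) (k + 1), PermContains π ρ) (p : Fin n)
    (hp1 : underA1 n (k + 2) b π ≤ (π p : ℕ) + 1) (hp2 : (π p : ℕ) + 1 < underA n (k + 2) b π) :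
    IsAssoc n (k + 2) b π ((π p : ℕ) + 1) := by
  obtain ⟨ρ, hρ, f, hf, ⟨j, hj, hfj⟩, l, hl, hfl⟩ := isAssoc_underA1 h
  rcases hp1.eq_or_lt with hp | hp
  · exact hp ▸ isAssoc_underA1 h
  rcases partialShuffle_replace hρ hf (l := l) (j := j) (p := p) (by omega) (by omega)
      (Fin.lt_def.2 (by omega)) (Fin.lt_def.2 (by omega)) with
    ⟨ρ', hρ', f', hf', ⟨x, hx, hfx⟩, y, hy, hfy⟩ | ⟨ρ', hρ', f', hf', x, hx, hfx⟩
  · exact ⟨ρ', hρ', f', hf', ⟨x, by omega, by rw [hfx, hfj]⟩, y, by omega, by rw [hfy]⟩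
  · have : underA n (k + 2) b π ≤ (π p : ℕ) + 1 :=
      Nat.sInf_le ⟨ρ', hρ', f', hf', x, by omega, by rw [hfx]⟩
    omega

end Underline

theorem not_orderIso_involves_underA_general (a b n m : ℕ) (ha : 2 ≤ a) (π : Equiv.Perm (Fin n))
    (h : ∃ ρ ∈ partialShuffle (a + b) (a - 1), PermContains π ρ)
    (idx : Fin m → Fin n)
    (hiso : ¬ ∀ j l : Fin m,
      π (idx j) < π (idx l) ↔ Smap n a b π (idx j) < Smap n a b π (idx l)) :
    (∃ j : Fin m, (π (idx j) : ℕ) + 1 = underA n a b π) ∧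
      (∃ l : Fin m, IsAssoc n a b π ((π (idx l) : ℕ) + 1)) := by
  obtain ⟨k, rfl⟩ : ∃ k, a = k + 2 := ⟨a - 2, by omega⟩
  obtain ⟨ρ, -, f, hf, ⟨j, hj, hfj⟩, l, hl, hfl⟩ := isAssoc_underA1 h
  have hlj : (π (f l) : ℕ) < π (f j) := Fin.lt_def.1 ((hf.2 l j).2 (Fin.lt_def.2 (by omega)))
  have hjn := (π (f j)).isLt
  obtain ⟨x, y, hxy⟩ : ∃ x y, ¬ (π (idx x) < π (idx y) ↔
      Smap n (k + 2) b π (idx x) < Smap n (k + 2) b π (idx y)) := by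
    simpa only [not_forall] using hiso
  simp only [Smap, if_pos h, Equiv.Perm.mul_apply] at hxy
  rcases eq_and_mem_Ico_of_not_lt_iff_rotPerm_lt (by omega) (by omega) hxy with
    ⟨hx, hy1, hy2⟩ | ⟨hy, hx1, hx2⟩
  · exact ⟨⟨x, by omega⟩, y, isAssoc_of_underA1_le_of_lt_underA h _ (by omega) (by omega)⟩
  · exact ⟨⟨y, by omega⟩, x, isAssoc_of_underA1_le_of_lt_underA h _ (by omega) (by omega)⟩

theorem not_orderIso_involves_underA (a b n m : ℕ) (ha : 2 ≤ a) (π : Equiv.Perm (Fin n))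
    (h : ∃ ρ ∈ partialShuffle (a + b) (a - 1), PermContains π ρ)
    (idx : Fin m → Fin n) (hidx : StrictMono idx)
    (hiso : ¬ ∀ j l : Fin m,
      π (idx j) < π (idx l) ↔ Smap n a b π (idx j) < Smap n a b π (idx l)) :
    (∃ j : Fin m, (π (idx j) : ℕ) + 1 = underA n a b π) ∧
      (∃ l : Fin m, IsAssoc n a b π ((π (idx l) : ℕ) + 1)) :=
  not_orderIso_involves_underA_general a b n m ha π h idx hiso
end

section
/- Fix integers a ≥ 2, b ≥ 0 with a + b ≥ 2, and m ≥ 1. If a permutation π of size n avoids the permutation σ_{a,b} and avoids the decreasing permutation δ_{m+1}, then S(π) avoids δ_{m+1}. -/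
open Equiv Function

/-! Let `x = underline-(a-1)` and `y = underline-a`, and let `p` be the position of `y` in `π`.
`S` moves `y` just below the values of `[x, y)` and otherwise preserves the relative order of
values, so a decreasing subsequence of `S(π)` that is not decreasing in `π` passes through `p`;
its entries before `p` have values at least `x` and its entries after `p` have values below `x`.
Minimality of `y`, and then of `x`, provides an entry of `π` strictly between the neighbours of
`p` in the subsequence, both in position and in value: otherwise the neighbour before `p` could
replace the `a`-element `y` by a smaller one, or the neighbour after `p` could replace the
`(a-1)`-element `x` by a smaller one. Splicing this entry in for `p` gives a decreasing
subsequence of `π` of the same length. -/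

theorem strictMono_update_of {ι α : Type*} [Preorder ι] [DecidableEq ι] [Preorder α]
    {f : ι → α} {k : ι} {r : α} (hf : ∀ l l', l ≠ k → l' ≠ k → l < l' → f l < f l')
    (hlt : ∀ l < k, f l < r) (hgt : ∀ l, k < l → r < f l) :
    StrictMono (update f k r) := by
  intro l l' hll'
  rcases eq_or_ne l k with rfl | hl
  · rw [update_self, update_of_ne hll'.ne']
    exact hgt l' hll'
  rcases eq_or_ne l' k with rfl | hl'
  · rw [update_self, update_of_ne hl]
    exact hlt l hll'
  rw [update_of_ne hl, update_of_ne hl']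
  exact hf l l' hl hl' hll'

variable {n N : ℕ}

theorem permContains_descPerm_iff {π : Perm (Fin n)} {k : ℕ} :
    PermContains π (descPerm k) ↔
      ∃ F : Fin k → Fin n, StrictMono F ∧ StrictAnti (π ∘ F) := by
  simp only [PermContains, PermOcc, descPerm, Fin.revPerm_apply, Fin.rev_lt_rev]
  exact exists_congr fun F => and_congr_right fun _ =>
    ⟨fun h l l' hll' => (h l' l).mpr hll', fun h _ _ => h.lt_iff_gt⟩

theorem rotPerm_val {x y : ℕ} (hxy : x ≤ y) (hy : y < n) (v : Fin n) :
    (rotPerm n x y v : ℕ) =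
      if (v : ℕ) = y then x else if x ≤ v ∧ v < y then v + 1 else v := by
  rw [rotPerm, dif_pos ⟨hxy, hy⟩]
  simp only [Equiv.coe_fn_mk]
  split_ifs <;> rfl

theorem rotPerm_lt_rotPerm_iff {x y u v : Fin n} (hxy : x ≤ y) (hu : u ≠ y) (hv : v ≠ y) :
    rotPerm n x y u < rotPerm n x y v ↔ u < v := by
  rw [Fin.le_def] at hxy
  rw [Fin.lt_def, Fin.lt_def, rotPerm_val hxy y.isLt, rotPerm_val hxy y.isLt,
    if_neg (Fin.val_ne_of_ne hu), if_neg (Fin.val_ne_of_ne hv)]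
  split_ifs <;> omega

theorem rotPerm_lt_rotPerm_self_iff {x y v : Fin n} (hxy : x ≤ y) (hv : v ≠ y) :
    rotPerm n x y v < rotPerm n x y y ↔ v < x := by
  rw [Fin.le_def] at hxy
  rw [Fin.lt_def, Fin.lt_def, rotPerm_val hxy y.isLt, rotPerm_val hxy y.isLt,
    if_neg (Fin.val_ne_of_ne hv), if_pos rfl]
  split_ifs <;> omega

/-- An occurrence in `π` of a pattern of the partial shuffle in which the entry of rank `i` is
the displaced one, encoded by `W r`, the position of the entry of rank `r` (ranks 0-indexed). -/
structure IsShuffleOcc (π : Perm (Fin n)) (i : Fin N) (W : Fin N → Fin n) : Prop where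
  strictMono_val : StrictMono (π ∘ W)
  lt_of_ne : ∀ r s, r ≠ i → s ≠ i → r < s → W r < W s
  not_strictMono : ¬ StrictMono W

theorem PermOcc.isShuffleOcc {π : Perm (Fin n)} {ρ : Perm (Fin N)} {f : Fin N → Fin n}
    {i : Fin N} (hρ : ρ ∈ partialShuffle N (i + 1)) (hf : PermOcc π ρ f) :
    IsShuffleOcc π i (f ∘ ρ.symm) where
  strictMono_val r s hrs := by
    simpa only [comp_apply, hf.2, apply_symm_apply] using hrs
  lt_of_ne r s hr hs hrs := by
    refine hf.1 (lt_of_not_ge fun hsr => ?_)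
    have := hρ.2 _ _ (hsr.lt_of_ne (ρ.symm.injective.ne hrs.ne'))
      (by simpa [Fin.ext_iff] using hs) (by simpa [Fin.ext_iff] using hr)
    simp only [apply_symm_apply] at this
    exact lt_asymm hrs this
  not_strictMono hmono := by
    have hsymm : StrictMono ρ.symm := fun r s hrs => hf.1.lt_iff_lt.mp (hmono hrs)
    have h1 : ρ.symm = 1 := (Perm.monotone_iff _).mp hsymm.monotone
    exact hρ.1 (by rw [← ρ.symm_symm, h1]; rfl)

namespace IsShuffleOcc

variable {π : Perm (Fin n)} {i j : Fin N} {W : Fin N → Fin n}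

theorem injective (hW : IsShuffleOcc π i W) : Injective W :=
  hW.strictMono_val.injective.of_comp

theorem exists_permOcc (hW : IsShuffleOcc π i W) :
    ∃ ρ ∈ partialShuffle N (i + 1), ∃ f, PermOcc π ρ f ∧ f ∘ ρ.symm = W := by
  set σ := Tuple.sort W
  have hσ : StrictMono (W ∘ σ) :=
    (Tuple.monotone_sort W).strictMono_of_injective (hW.injective.comp σ.injective)
  refine ⟨σ, ⟨fun h1 => hW.not_strictMono ?_, fun r s hrs hr hs => ?_⟩, W ∘ σ,
    ⟨hσ, fun _ _ => hW.strictMono_val.lt_iff_lt⟩, by ext; simp⟩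
  · simpa [h1] using hσ
  · refine lt_of_not_ge fun hsr => lt_asymm (hσ hrs) ?_
    exact hW.lt_of_ne _ _ (by simpa [Fin.ext_iff] using hs) (by simpa [Fin.ext_iff] using hr)
      (hsr.lt_of_ne (σ.injective.ne hrs.ne'))

theorem exists_lt_or (hW : IsShuffleOcc π i W) (hij : i ⋖ j) :
    (∃ r < i, W i < W r) ∨ W j < W i := by
  by_contra! h
  obtain ⟨hbelow, hij'⟩ := h
  refine hW.not_strictMono fun r s hrs => ?_
  rcases eq_or_ne r i with rfl | hr
  · rcases eq_or_ne s j with rfl | hs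
    · exact hij'.lt_of_ne (hW.injective.ne hrs.ne)
    · exact hij'.trans_lt (hW.lt_of_ne j s hij.lt.ne' hrs.ne'
        ((hij.ge_of_gt hrs).lt_of_ne (Ne.symm hs)))
  rcases eq_or_ne s i with rfl | hs
  · exact (hbelow r hrs).lt_of_ne (hW.injective.ne hrs.ne)
  · exact hW.lt_of_ne r s hr hs hrs

theorem update_left (hW : IsShuffleOcc π i W) (hij : i ⋖ j) {d : Fin n} (hd : W j < d)
    (hlow : ∀ r < i, π (W r) < π d) (hdi : π d < π (W i)) :
    IsShuffleOcc π i (update W i d) where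
  strictMono_val := by
    rw [comp_update]
    exact strictMono_update_of (fun _ _ _ _ h => hW.strictMono_val h) hlow
      fun _ hr => hdi.trans (hW.strictMono_val hr)
  lt_of_ne r s hr hs hrs := by
    rw [update_of_ne hr, update_of_ne hs]
    exact hW.lt_of_ne r s hr hs hrs
  not_strictMono hmono := by
    have := hmono hij.lt
    rw [update_self, update_of_ne hij.lt.ne'] at this
    exact lt_asymm hd this

theorem update_right (hW : IsShuffleOcc π i W) (hij : i ⋖ j) {e : Fin n} (he : e < W j)
    (hie : π (W i) < π e) (hej : π e < π (W j)) (hbefore : ∀ r < i, W r < e)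
    (hi : W i < e ∨ W j < W i) :
    IsShuffleOcc π i (update W j e) where
  strictMono_val := by
    rw [comp_update]
    exact strictMono_update_of (fun _ _ _ _ h => hW.strictMono_val h)
      (fun _ hr => (hW.strictMono_val.monotone (hij.le_of_lt hr)).trans_lt hie)
      fun _ hr => hej.trans (hW.strictMono_val hr)
  lt_of_ne r s hr hs hrs := by
    rcases eq_or_ne r j with rfl | hrj
    · rw [update_self, update_of_ne hrs.ne']
      exact he.trans (hW.lt_of_ne r s hr hs hrs)
    rcases eq_or_ne s j with rfl | hsj
    · rw [update_self, update_of_ne hrj]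
      exact hbefore r ((hij.le_of_lt hrs).lt_of_ne hr)
    rw [update_of_ne hrj, update_of_ne hsj]
    exact hW.lt_of_ne r s hr hs hrs
  not_strictMono hmono := by
    rcases hi with hi | hi
    · obtain ⟨r, hr, hWr⟩ := (hW.exists_lt_or hij).resolve_right (lt_asymm (hi.trans he))
      have := hmono hr
      rw [update_of_ne (hr.trans hij.lt).ne, update_of_ne hij.lt.ne] at this
      exact lt_asymm hWr this
    · have := hmono hij.lt
      rw [update_self, update_of_ne hij.lt.ne] at this
      exact lt_asymm (this.trans he) hi

end IsShuffleOcc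

/-- `W` realises `underline-a` at rank `j` and, among the occurrences doing so, `underline-(a-1)`
at rank `i`. -/
structure IsLeastShuffleOcc (π : Perm (Fin n)) (i j : Fin N) (W : Fin N → Fin n) : Prop where
  isShuffleOcc : IsShuffleOcc π i W
  le_right : ∀ W', IsShuffleOcc π i W' → π (W j) ≤ π (W' j)
  le_left : ∀ W', IsShuffleOcc π i W' → π (W' j) = π (W j) → π (W i) ≤ π (W' i)

section Translation

variable {π : Perm (Fin n)} {i j : Fin N}

theorem exists_val_add_one_eq_and_iff {ρ : Perm (Fin N)} {c : ℕ} (hj : (j : ℕ) + 1 = c)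
    {Q : Fin N → Prop} : (∃ l, (ρ l : ℕ) + 1 = c ∧ Q l) ↔ Q (ρ.symm j) := by
  subst hj
  simp only [add_left_inj, Fin.val_inj, ← ρ.eq_symm_apply, exists_eq_left]

theorem exists_permOcc_iff (P : (Fin N → Fin n) → Prop) :
    (∃ ρ ∈ partialShuffle N (i + 1), ∃ f, PermOcc π ρ f ∧ P (f ∘ ρ.symm)) ↔
      ∃ W, IsShuffleOcc π i W ∧ P W := by
  constructor
  · rintro ⟨ρ, hρ, f, hf, hP⟩
    exact ⟨_, hf.isShuffleOcc hρ, hP⟩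
  · rintro ⟨W, hW, hP⟩
    obtain ⟨ρ, hρ, f, hf, rfl⟩ := hW.exists_permOcc
    exact ⟨ρ, hρ, f, hf, hP⟩

theorem actsAs_partialShuffle_iff {c c' v : ℕ} (hi : (i : ℕ) + 1 = c)
    (hj : (j : ℕ) + 1 = c') :
    ActsAs π (partialShuffle N c) c' v ↔
      ∃ W, IsShuffleOcc π i W ∧ (π (W j) : ℕ) + 1 = v := by
  subst hi
  simp only [ActsAs, exists_val_add_one_eq_and_iff hj]
  exact exists_permOcc_iff fun W => (π (W j) : ℕ) + 1 = v

theorem isAssoc_iff_s9 {a b q : ℕ} {π : Perm (Fin n)} {i j : Fin (a + b)}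
    (hi : (i : ℕ) + 1 = a - 1) (hj : (j : ℕ) + 1 = a) :
    IsAssoc n a b π q ↔ ∃ W, IsShuffleOcc π i W ∧
      (π (W j) : ℕ) + 1 = underA n a b π ∧ (π (W i) : ℕ) + 1 = q := by
  simp only [IsAssoc, exists_val_add_one_eq_and_iff hj, exists_val_add_one_eq_and_iff hi]
  rw [← hi]
  exact exists_permOcc_iff fun W =>
    (π (W j) : ℕ) + 1 = underA n a b π ∧ (π (W i) : ℕ) + 1 = q

theorem exists_isLeastShuffleOcc {a b : ℕ} {π : Perm (Fin n)} {i j : Fin (a + b)}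
    (hi : (i : ℕ) + 1 = a - 1) (hj : (j : ℕ) + 1 = a)
    (hπ : ∃ ρ ∈ partialShuffle (a + b) (a - 1), PermContains π ρ) :
    ∃ W, IsLeastShuffleOcc π i j W ∧
      (π (W i) : ℕ) + 1 = underA1 n a b π ∧ (π (W j) : ℕ) + 1 = underA n a b π := by
  have hacts := fun v => actsAs_partialShuffle_iff (π := π) (v := v) hi hj
  have hA : ActsAs π (partialShuffle (a + b) (a - 1)) a (underA n a b π) := by
    obtain ⟨ρ, hρ, f, hf⟩ := hπ
    rw [← hi] at hρ
    exact Nat.sInf_mem (s := {v | ActsAs π (partialShuffle (a + b) (a - 1)) a v})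
      ⟨_, (hacts _).mpr ⟨_, hf.isShuffleOcc hρ, rfl⟩⟩
  obtain ⟨W₀, hW₀, hW₀j⟩ := (hacts _).mp hA
  have hq : IsAssoc n a b π (underA1 n a b π) :=
    Nat.sInf_mem (s := {q | IsAssoc n a b π q})
      ⟨_, (isAssoc_iff_s9 hi hj).mpr ⟨W₀, hW₀, hW₀j, rfl⟩⟩
  obtain ⟨W, hW, hWj, hWi⟩ := (isAssoc_iff_s9 hi hj).mp hq
  refine ⟨W, ⟨hW, fun W' hW' => ?_, fun W' hW' hW'j => ?_⟩, hWi, hWj⟩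
  · have : underA n a b π ≤ (π (W' j) : ℕ) + 1 :=
      Nat.sInf_le ((hacts _).mpr ⟨W', hW', rfl⟩)
    rw [Fin.le_def]
    omega
  · have : underA1 n a b π ≤ (π (W' i) : ℕ) + 1 :=
      Nat.sInf_le ((isAssoc_iff_s9 hi hj).mpr ⟨W', hW', by rw [hW'j, hWj], rfl⟩)
    rw [Fin.le_def]
    omega

end Translation

namespace IsLeastShuffleOcc

variable {π : Perm (Fin n)} {i j : Fin N} {W : Fin N → Fin n}

theorem val_lt (hW : IsLeastShuffleOcc π i j W) (hij : i ⋖ j) : π (W i) < π (W j) :=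
  hW.isShuffleOcc.strictMono_val hij.lt

theorem val_right_le (hW : IsLeastShuffleOcc π i j W) (hij : i ⋖ j) {e : Fin n}
    (he : e < W j) (hie : π (W i) ≤ π e) (hbefore : ∀ r < i, W r < e)
    (hi : W i ≤ e ∨ W j < W i) : π (W j) ≤ π e := by
  have hW' := hW.isShuffleOcc
  by_contra! hej
  rcases hie.lt_or_eq with hie | hie
  · have hi' : W i < e ∨ W j < W i :=
      hi.imp_left fun h => h.lt_of_ne (ne_of_apply_ne π hie.ne)
    have := hW.le_right _ (hW'.update_right hij he hie hej hbefore hi')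
    rw [update_self] at this
    exact this.not_gt hej
  · obtain rfl : W i = e := π.injective hie
    rcases hW'.exists_lt_or hij with ⟨r, hr, hWr⟩ | hji
    · exact lt_asymm (hbefore r hr) hWr
    · exact lt_asymm he hji

theorem exists_after_lt (hW : IsLeastShuffleOcc π i j W) (hij : i ⋖ j) {e : Fin n}
    (he : e < W j) (hie : π (W i) ≤ π e) : ∃ r, e < r ∧ π r < π e := by
  by_contra! hafter
  have hafter' : ∀ s, e ≤ s → π e ≤ π s := fun s hes =>
    hes.eq_or_lt.elim (fun h => h ▸ le_rfl) (hafter s)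
  have hbefore : ∀ r < i, W r < e := fun r hr => lt_of_not_ge fun h =>
    ((hW.isShuffleOcc.strictMono_val hr).trans_le hie).not_ge (hafter' _ h)
  have hi : W i ≤ e := le_of_not_gt fun h =>
    h.ne (π.injective (le_antisymm hie (hafter _ h))).symm
  exact he.ne (π.injective (le_antisymm (hafter _ he)
    (hW.val_right_le hij he hie hbefore (Or.inl hi))))

theorem exists_between (hW : IsLeastShuffleOcc π i j W) (hij : i ⋖ j) {e d : Fin n}
    (he : e < W j) (hd : W j < d) (hie : π (W i) ≤ π e) (hdi : π d < π (W i)) :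
    ∃ r, e < r ∧ r < d ∧ π d < π r ∧ π r < π e := by
  by_contra! hmid
  have hW' := hW.isShuffleOcc
  have hmid' : ∀ s, e ≤ s → s < d → π d < π s → π e ≤ π s := fun s hes hsd hds =>
    hes.eq_or_lt.elim (fun h => h ▸ le_rfl) (hmid s · hsd hds)
  have hi : W i ≤ e ∨ W j < W i := by
    refine (le_or_gt (W i) e).imp_right fun h => hd.trans (lt_of_not_ge fun hid => ?_)
    rcases hid.lt_or_eq with hid | rfl
    · exact h.ne (π.injective (le_antisymm hie (hmid _ h hid hdi))).symm
    · exact lt_irrefl _ hdi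
  have hbelow_d : ∀ r < i, W r < d := fun r hr =>
    (hW'.lt_of_ne r j hr.ne hij.lt.ne' (hr.trans hij.lt)).trans hd
  have key : ∀ r < i, π d < π (W r) → W r < e := fun r hr hdr => lt_of_not_ge fun h =>
    ((hW'.strictMono_val hr).trans_le hie).not_ge (hmid' _ h (hbelow_d r hr) hdr)
  have hbefore : ∀ r < i, W r < e := by
    by_cases hlow : ∀ r < i, π (W r) < π d
    · have := hW.le_left _ (hW'.update_left hij hd hlow hdi) (by rw [update_of_ne hij.lt.ne'])
      rw [update_self] at this
      exact absurd hdi this.not_gt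
    push Not at hlow
    obtain ⟨r₀, hr₀, hdr₀⟩ := hlow
    have hdr₀ : π d < π (W r₀) := hdr₀.lt_of_ne (π.injective.ne (hbelow_d r₀ hr₀).ne')
    intro r hr
    rcases lt_or_ge (π d) (π (W r)) with hdr | hrd
    · exact key r hr hdr
    · have hrr₀ : r < r₀ := hW'.strictMono_val.lt_iff_lt.mp (hrd.trans_lt hdr₀)
      exact (hW'.lt_of_ne r r₀ hr.ne hr₀.ne hrr₀).trans (key r₀ hr₀ hdr₀)
  exact he.ne (π.injective (le_antisymm (hmid _ he hd (hdi.trans (hW.val_lt hij)))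
    (hW.val_right_le hij he hie hbefore hi)))

end IsLeastShuffleOcc

namespace IsLeastShuffleOcc

variable {π : Perm (Fin n)} {i j : Fin N} {W : Fin N → Fin n}

theorem exists_splice (hW : IsLeastShuffleOcc π i j W) (hij : i ⋖ j) {m : ℕ}
    {F : Fin (m + 1) → Fin n} (hF : StrictMono F) {k : Fin (m + 1)}
    (hoff : ∀ l l', l ≠ k → l' ≠ k → l < l' → π (F l') < π (F l)) (hk : F k = W j)
    (hbefore : ∀ l < k, π (W i) ≤ π (F l)) (hafter : ∀ l, k < l → π (F l) < π (W i)) :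
    ∃ r, (∀ l < k, F l < r ∧ π r < π (F l)) ∧
      (∀ l, k < l → r < F l ∧ π (F l) < π r) := by
  rcases Fin.eq_zero_or_eq_succ k with rfl | ⟨k', rfl⟩
  · exact ⟨W j, fun l hl => absurd hl (Fin.not_lt_zero l),
      fun l hl => ⟨hk ▸ hF hl, (hafter l hl).trans (hW.val_lt hij)⟩⟩
  have hek := Fin.castSucc_lt_succ (i := k')
  have hprev : ∀ l < k'.succ, F l ≤ F k'.castSucc ∧ π (F k'.castSucc) ≤ π (F l) := by
    intro l hl
    have hl' := Fin.le_castSucc_iff.mpr hl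
    exact ⟨hF.monotone hl', hl'.eq_or_lt.elim (fun h => h ▸ le_rfl)
      fun h => (hoff _ _ hl.ne hek.ne h).le⟩
  suffices ∃ r, F k'.castSucc < r ∧ π r < π (F k'.castSucc) ∧
      ∀ l, k'.succ < l → r < F l ∧ π (F l) < π r by
    obtain ⟨r, her, hre, hr⟩ := this
    exact ⟨r, fun l hl => ⟨(hprev l hl).1.trans_lt her, hre.trans_le (hprev l hl).2⟩, hr⟩
  have he : F k'.castSucc < W j := hk ▸ hF hek
  rcases Fin.eq_castSucc_or_eq_last k'.succ with ⟨k'', hk''⟩ | hlast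
  · have hkd : k'.succ < k''.succ := hk'' ▸ Fin.castSucc_lt_succ
    obtain ⟨r, her, hrd, hdr, hre⟩ :=
      hW.exists_between hij he (hk ▸ hF hkd) (hbefore _ hek) (hafter _ hkd)
    refine ⟨r, her, hre, fun l hl => ?_⟩
    have hl' : k''.succ ≤ l := Fin.castSucc_lt_iff_succ_le.mp (hk'' ▸ hl)
    refine ⟨hrd.trans_le (hF.monotone hl'), lt_of_le_of_lt ?_ hdr⟩
    exact hl'.eq_or_lt.elim (fun h => h ▸ le_rfl) fun h => (hoff _ _ hkd.ne' hl.ne' h).le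
  · obtain ⟨r, her, hre⟩ := hW.exists_after_lt hij he (hbefore _ hek)
    exact ⟨r, her, hre, fun l hl => absurd (hlast ▸ hl) (Fin.le_last l).not_gt⟩

theorem not_permContains_rotPerm_mul (hW : IsLeastShuffleOcc π i j W) (hij : i ⋖ j) {m : ℕ}
    (hδ : ¬ PermContains π (descPerm (m + 1))) :
    ¬ PermContains (rotPerm n (π (W i)) (π (W j)) * π) (descPerm (m + 1)) := by
  rw [permContains_descPerm_iff] at hδ ⊢
  rintro ⟨F, hF, hanti⟩
  have hxy := (hW.val_lt hij).le
  by_cases hk : ∃ k, F k = W j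
  swap
  · push Not at hk
    have hne : ∀ l, π (F l) ≠ π (W j) := fun l h => hk l (π.injective h)
    exact hδ ⟨F, hF, fun l l' h => (rotPerm_lt_rotPerm_iff hxy (hne l') (hne l)).mp (hanti h)⟩
  obtain ⟨k, hk⟩ := hk
  have hne : ∀ l ≠ k, π (F l) ≠ π (W j) := fun l hl h =>
    hl (hF.injective (π.injective (h.trans (congrArg π hk).symm)))
  have hoff : ∀ l l', l ≠ k → l' ≠ k → l < l' → π (F l') < π (F l) :=
    fun l l' hl hl' h =>
      (rotPerm_lt_rotPerm_iff hxy (hne l' hl') (hne l hl)).mp (hanti h)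
  obtain ⟨r, hr_before, hr_after⟩ := hW.exists_splice hij hF hoff hk
    (fun l hl => not_lt.mp fun h => lt_asymm (by simpa [hk] using hanti hl)
      ((rotPerm_lt_rotPerm_self_iff hxy (hne l hl.ne)).mpr h))
    (fun l hl => (rotPerm_lt_rotPerm_self_iff hxy (hne l hl.ne')).mp
      (by simpa [hk] using hanti hl))
  refine hδ ⟨update F k r, strictMono_update_of (fun _ _ _ _ h => hF h)
    (fun l hl => (hr_before l hl).1) (fun l hl => (hr_after l hl).1), ?_⟩
  rw [comp_update]
  exact strictMono_update_of (α := (Fin n)ᵒᵈ) hoff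
    (fun l hl => (hr_before l hl).2) (fun l hl => (hr_after l hl).2)

end IsLeastShuffleOcc

theorem Smap_avoids_delta_general (a b m n : ℕ) (ha : 2 ≤ a) (π : Equiv.Perm (Fin n))
    (hδ : ¬ PermContains π (descPerm (m + 1))) :
    ¬ PermContains (Smap n a b π) (descPerm (m + 1)) := by
  unfold Smap
  split_ifs with hπ
  · obtain ⟨W, hW, hWi, hWj⟩ := exists_isLeastShuffleOcc (i := ⟨a - 2, by omega⟩)
      (j := ⟨a - 1, by omega⟩) (by simp only; omega) (by simp only; omega) hπ
    rw [← hWi, ← hWj, Nat.add_sub_cancel, Nat.add_sub_cancel]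
    have hij : (⟨a - 2, by omega⟩ : Fin (a + b)) ⋖ ⟨a - 1, by omega⟩ := by
      simp only [Fin.covBy_iff, Nat.covBy_iff_add_one_eq]
      omega
    exact hW.not_permContains_rotPerm_mul hij hδ
  · exact hδ

theorem Smap_avoids_delta (a b m n : ℕ) (ha : 2 ≤ a) (hm : 1 ≤ m) (π : Equiv.Perm (Fin n))
    (hσ : ¬ PermContains π (sigmaPerm (a + b) a ha (Nat.le_add_right a b)))
    (hδ : ¬ PermContains π (descPerm (m + 1))) :
    ¬ PermContains (Smap n a b π) (descPerm (m + 1)) :=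
  Smap_avoids_delta_general a b m n ha π hδ
end

section
/- For every positive integer k, the number of sequences (a_1, a_2, …, a_k) of non-negative integers satisfying a_1 + a_2 + ⋯ + a_j < j for every j ∈ {1,…,k} equals the k-th Catalan number C_k. -/
/-!
Allow the partial sums an extra slack `c`, and let `N n c` count the sequences of length `n`.
Removing the first term gives `N (n + 1) c = ∑_{d ≤ c} N n (d + 1)`. Summing this recursion by
induction on `n` yields the convolution `N n (c + 1) = ∑_{i + j = n} N i 0 * N j c`; at `c = 0`
it says that `N (n + 1) 0 = N n 1` obeys the Catalan recurrence.
-/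

open Finset

theorem Fin.sum_Iic_zero {M : Type*} [AddCommMonoid M] {n : ℕ} (f : Fin (n + 1) → M) :
    ∑ i ∈ Iic 0, f i = f 0 := by
  rw [← bot_eq_zero, Iic_bot, sum_singleton]

theorem Fin.sum_Iic_succ {M : Type*} [AddCommMonoid M] {n : ℕ} (f : Fin (n + 1) → M)
    (j : Fin n) : ∑ i ∈ Iic j.succ, f i = f 0 + ∑ i ∈ Iic j, f i.succ := by
  simp only [← filter_ge_eq_Iic, sum_filter, Fin.sum_univ_succ, Fin.zero_le, if_true,
    Fin.succ_le_succ_iff]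

/-- With `c = 0` this is the condition `a₁ + ⋯ + a_{j+1} < j + 1` of the theorem, indexed from `0`;
the slack `c` is what the recursion on the first term needs. -/
def PartialSumsLE {n : ℕ} (c : ℕ) (f : Fin n → ℕ) : Prop :=
  ∀ j : Fin n, ∑ i ∈ Iic j, f i ≤ j + c

theorem partialSumsLE_succ_iff {n c : ℕ} (f : Fin (n + 1) → ℕ) :
    PartialSumsLE c f ↔ f 0 ≤ c ∧ PartialSumsLE (c - f 0 + 1) (Fin.tail f) := by
  simp only [PartialSumsLE, Fin.forall_fin_succ, Fin.sum_Iic_zero, Fin.sum_Iic_succ,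
    Fin.val_zero, Fin.val_succ, Fin.tail]
  constructor <;> rintro ⟨h0, hs⟩ <;> exact ⟨by omega, fun j => by have := hs j; omega⟩

abbrev BoundedSeq (n c : ℕ) : Type := {f : Fin n → ℕ // PartialSumsLE c f}

namespace BoundedSeq

instance (n c : ℕ) : Finite (BoundedSeq n c) := by
  have bound (f : BoundedSeq n c) (j : Fin n) : f.1 j < n + c + 1 := by
    have := single_le_sum (fun i _ => Nat.zero_le (f.1 i)) (mem_Iic.2 (le_refl j))
    have := f.2 j
    omega
  refine Finite.of_injective (fun f j => (⟨f.1 j, bound f j⟩ : Fin (n + c + 1))) fun f g h => ?_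
  exact Subtype.ext <| funext fun j => by simpa using congrFun h j

/-- Splitting off the first term `c - d`, which leaves the slack `d + 1` for the tail. -/
def consEquiv (n c : ℕ) : BoundedSeq (n + 1) c ≃ Σ d : Fin (c + 1), BoundedSeq n (d + 1) where
  toFun f :=
    have hf := (partialSumsLE_succ_iff f.1).1 f.2
    ⟨⟨c - f.1 0, by omega⟩, ⟨Fin.tail f.1, hf.2⟩⟩
  invFun g :=
    ⟨Fin.cons (c - g.1) g.2.1, (partialSumsLE_succ_iff _).2 <| by
      simp only [Fin.cons_zero, Fin.tail_cons]
      exact ⟨by omega, by rw [Nat.sub_sub_self (by omega)]; exact g.2.2⟩⟩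
  left_inv f := by
    have := ((partialSumsLE_succ_iff f.1).1 f.2).1
    refine Subtype.ext ?_
    simp only [Nat.sub_sub_self this]
    exact Fin.cons_self_tail f.1
  right_inv g := Sigma.subtype_ext (Fin.ext (by simp only [Fin.cons_zero]; omega))
    (Fin.tail_cons (α := fun _ => ℕ) (c - g.1) g.2.1)

theorem card_zero (c : ℕ) : Nat.card (BoundedSeq 0 c) = 1 :=
  Nat.card_eq_one_iff_unique.2 ⟨inferInstance, ⟨⟨Fin.elim0, fun j => j.elim0⟩⟩⟩

theorem card_succ (n c : ℕ) :
    Nat.card (BoundedSeq (n + 1) c) = ∑ d ∈ range (c + 1), Nat.card (BoundedSeq n (d + 1)) := by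
  rw [Nat.card_congr (consEquiv n c), Nat.card_sigma,
    Fin.sum_univ_eq_sum_range (fun d => Nat.card (BoundedSeq n (d + 1)))]

theorem card_succ_right (n c : ℕ) :
    Nat.card (BoundedSeq n (c + 1)) =
      ∑ p ∈ antidiagonal n, Nat.card (BoundedSeq p.1 0) * Nat.card (BoundedSeq p.2 c) := by
  induction n generalizing c with
  | zero => simp [card_zero]
  | succ n ih =>
    have sum_card_range (m : ℕ) : ∑ d ∈ range (c + 2), Nat.card (BoundedSeq m d) =
        Nat.card (BoundedSeq (m + 1) c) + Nat.card (BoundedSeq m 0) := by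
      rw [sum_range_succ', card_succ]
    calc Nat.card (BoundedSeq (n + 1) (c + 1))
        = ∑ d ∈ range (c + 2), ∑ p ∈ antidiagonal n,
            Nat.card (BoundedSeq p.1 0) * Nat.card (BoundedSeq p.2 d) := by
          simp only [card_succ, ih]
      _ = ∑ p ∈ antidiagonal n, Nat.card (BoundedSeq p.1 0) *
            (Nat.card (BoundedSeq (p.2 + 1) c) + Nat.card (BoundedSeq p.2 0)) := by
          simp only [sum_comm (s := range _), ← mul_sum, sum_card_range]
      _ = ∑ p ∈ antidiagonal n, Nat.card (BoundedSeq p.1 0) * Nat.card (BoundedSeq (p.2 + 1) c) +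
            Nat.card (BoundedSeq (n + 1) 0) * Nat.card (BoundedSeq 0 c) := by
          rw [card_succ, sum_range_one, ih 0, card_zero, mul_one, ← sum_add_distrib]
          simp only [mul_add]
      _ = ∑ p ∈ antidiagonal (n + 1),
            Nat.card (BoundedSeq p.1 0) * Nat.card (BoundedSeq p.2 c) := by
          rw [Nat.sum_antidiagonal_succ', add_comm]

theorem card_eq_catalan (n : ℕ) : Nat.card (BoundedSeq n 0) = catalan n := by
  induction n using Nat.strong_induction_on with
  | _ n ih =>
    rcases n with _ | n
    · rw [card_zero, catalan_zero]
    · rw [card_succ, sum_range_one, card_succ_right, catalan_succ']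
      refine sum_congr rfl fun p hp => ?_
      have := mem_antidiagonal.1 hp
      rw [ih p.1 (by omega), ih p.2 (by omega)]

end BoundedSeq

theorem catalan_counts_bounded_partial_sums_general (k : ℕ) :
    Nat.card {f : Fin k → ℕ // ∀ j : Fin k, ∑ i ∈ Finset.Iic j, f i < (j : ℕ) + 1} =
      catalan k := by
  rw [← BoundedSeq.card_eq_catalan]
  exact Nat.card_congr <| Equiv.subtypeEquivRight fun f => forall_congr' fun j => Nat.lt_succ_iff

theorem catalan_counts_bounded_partial_sums (k : ℕ) (hk : 1 ≤ k) :
    Nat.card {f : Fin k → ℕ // ∀ j : Fin k, ∑ i ∈ Finset.Iic j, f i < (j : ℕ) + 1} =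
      catalan k :=
  catalan_counts_bounded_partial_sums_general k
end

section
/- For all integers a ≥ 2 and b ≥ 0 with a + b ≥ 2, the intersection of the partial shuffles Π(a,b) and Π(a−1,b+1) consists of exactly one permutation, namely σ_{a,b}: Π(a,b) ∩ Π(a−1,b+1) = {σ_{a,b}}. -/
/-! A permutation lying in both shuffles can only have inversions that involve the moved value
of each of them, so its only inversion is `a` followed by `a - 1`. Composing with the
transposition of `a - 1` and `a` then yields a strictly increasing, hence trivial, permutation. -/

namespace Equiv.Perm

variable {m : ℕ}

theorem swap_apply_lt_swap_apply {c d x y : Fin m} (hcd : (c : ℕ) + 1 = d) (hxy : x < y)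
    (h : ¬(x = c ∧ y = d)) : swap c d x < swap c d y := by
  simp only [swap_apply_def, Fin.ext_iff, Fin.lt_def] at *
  split_ifs <;> omega

theorem swap_mem_partialShuffle {c d : Fin m} (hcd : (c : ℕ) + 1 = d) {a : ℕ}
    (ha : a = c + 1 ∨ a = d + 1) : swap c d ∈ partialShuffle m a := by
  refine ⟨fun h => by rw [swap_eq_one_iff, Fin.ext_iff] at h; omega, fun i j hij hi hj => ?_⟩
  refine swap_apply_lt_swap_apply hcd hij ?_
  rintro ⟨rfl, rfl⟩
  simp only [swap_apply_left, swap_apply_right] at hi hj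
  omega

theorem eq_swap_of_inversions {σ : Perm (Fin m)} (hσ : σ ≠ 1) {c d : Fin m}
    (hcd : (c : ℕ) + 1 = d) (hinv : ∀ i j, i < j → σ j < σ i → σ i = d ∧ σ j = c) :
    σ = swap c d := by
  obtain ⟨i₀, j₀, hij₀, hσij₀⟩ : ∃ i j, i < j ∧ σ j < σ i := by
    by_contra! hmono
    exact hσ (Perm.ext fun x =>
      StrictMono.apply_eq fun i j hij => (hmono i j hij).lt_of_ne (σ.injective.ne hij.ne))
  obtain ⟨hi₀, hj₀⟩ := hinv i₀ j₀ hij₀ hσij₀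
  suffices hmono : StrictMono (swap c d * σ) by
    have h1 : swap c d * σ = 1 := Perm.ext fun x => hmono.apply_eq
    rw [← swap_mul_self_mul c d σ, h1, mul_one]
  intro k l hkl
  rcases lt_or_gt_of_ne (σ.injective.ne hkl.ne) with hσkl | hσlk
  · refine swap_apply_lt_swap_apply hcd hσkl fun ⟨hk, hl⟩ => ?_
    have hk : k = j₀ := σ.injective (hk.trans hj₀.symm)
    have hl : l = i₀ := σ.injective (hl.trans hi₀.symm)
    exact absurd (hij₀.trans (hk ▸ hl ▸ hkl)) (lt_irrefl _)
  · obtain ⟨hk, hl⟩ := hinv k l hkl hσlk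
    simp only [Perm.mul_apply, hk, hl, swap_apply_left, swap_apply_right, Fin.lt_def]
    omega

theorem inversion_of_mem_partialShuffle_inter {a : ℕ} {σ : Perm (Fin m)}
    (hσ : σ ∈ partialShuffle m a ∩ partialShuffle m (a - 1)) {i j : Fin m} (hij : i < j)
    (hji : σ j < σ i) : (σ i : ℕ) + 1 = a ∧ (σ j : ℕ) + 2 = a := by
  have hmoved : ∀ a', σ ∈ partialShuffle m a' → (σ i : ℕ) + 1 = a' ∨ (σ j : ℕ) + 1 = a' := by
    intro a' h
    by_contra! hnot
    exact lt_asymm hji (h.2 i j hij hnot.1 hnot.2)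
  have hmoved_a := hmoved a hσ.1
  have hmoved_pred := hmoved (a - 1) hσ.2
  have hji' := Fin.lt_def.mp hji
  omega

end Equiv.Perm

open Equiv.Perm in
theorem shuffle_intersection_eq_sigma (a b : ℕ) (ha : 2 ≤ a) :
    partialShuffle (a + b) a ∩ partialShuffle (a + b) (a - 1) =
      {sigmaPerm (a + b) a ha (Nat.le_add_right a b)} := by
  have hcd : a - 2 + 1 = a - 1 := by omega
  ext σ
  constructor
  · intro hσ
    refine eq_swap_of_inversions hσ.1.1 hcd fun i j hij hji => ?_
    have hvals := inversion_of_mem_partialShuffle_inter hσ hij hji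
    exact ⟨Fin.ext (by dsimp only; omega), Fin.ext (by dsimp only; omega)⟩
  · rintro rfl
    exact ⟨swap_mem_partialShuffle hcd (.inr (by dsimp only; omega)),
      swap_mem_partialShuffle hcd (.inl (by dsimp only; omega))⟩
end

section
/- For all integers a ≥ 1 and b ≥ 0 with a + b ≥ 2, the set of reverse complements of the partial shuffle Π(a,b) equals the partial shuffle Π(b+1, a−1); that is, (Π(a,b))^{rc} = Π(b+1, a−1). -/
/-- The reverse complement of a permutation: `π^{rc}_i = n + 1 - π_{n+1-i}`. -/
def rcPerm {n : ℕ} (π : Equiv.Perm (Fin n)) : Equiv.Perm (Fin n) :=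
  Fin.revPerm * π * Fin.revPerm

lemma rcPerm_apply {n : ℕ} (π : Equiv.Perm (Fin n)) (i : Fin n) :
    rcPerm π i = Fin.rev (π (Fin.rev i)) := rfl

lemma rcPerm_involutive {n : ℕ} : Function.Involutive (rcPerm (n := n)) := by
  intro π
  ext i
  simp [rcPerm_apply]

lemma rcPerm_eq_one_iff {n : ℕ} {π : Equiv.Perm (Fin n)} : rcPerm π = 1 ↔ π = 1 := by
  have rcPerm_one : rcPerm (1 : Equiv.Perm (Fin n)) = 1 := by
    ext i
    simp [rcPerm_apply]
  exact rcPerm_involutive.injective.eq_iff' rcPerm_one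

lemma val_rev_add_one_eq_iff {m c d : ℕ} (h : c + d = m + 1) (x : Fin m) :
    (Fin.rev x : ℕ) + 1 = d ↔ (x : ℕ) + 1 = c := by
  have := x.isLt
  rw [Fin.val_rev]
  omega

lemma rcPerm_mem_partialShuffle {m c d : ℕ} (h : c + d = m + 1) {σ : Equiv.Perm (Fin m)}
    (hσ : σ ∈ partialShuffle m c) : rcPerm σ ∈ partialShuffle m d := by
  obtain ⟨hne, hinc⟩ := hσ
  refine ⟨rcPerm_eq_one_iff.not.mpr hne, fun i j hij hi hj => ?_⟩
  simp only [rcPerm_apply, ne_eq, val_rev_add_one_eq_iff h] at hi hj ⊢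
  exact Fin.rev_lt_rev.mpr (hinc _ _ (Fin.rev_lt_rev.mpr hij) hj hi)

theorem rc_of_partialShuffle_general (a b : ℕ) :
    rcPerm '' partialShuffle (a + b) a = partialShuffle (a + b) (b + 1) := by
  rw [rcPerm_involutive.image_eq_preimage_symm]
  ext τ
  refine ⟨fun hτ => ?_, rcPerm_mem_partialShuffle (by omega)⟩
  rw [← rcPerm_involutive τ]
  exact rcPerm_mem_partialShuffle (by omega) hτ

theorem rc_of_partialShuffle (a b : ℕ) (ha : 1 ≤ a) (hab : 2 ≤ a + b) :
    rcPerm '' partialShuffle (a + b) a = partialShuffle (a + b) (b + 1) :=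
  rc_of_partialShuffle_general a b
end
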